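/- If G has a k-multicolored independent set, then the edge-weighted graph G' has a (k, 4n)-center. -/
import Mathlib


/-- The vertex set of the `k`-Multicolored Independent Set instance: `(i, l)` is the `(l+1)`-th
vertex of class `V_{i+1}`. -/
abbrev PV (k n : ℕ) := Fin k × Fin n

/-- Index set for the vertices `u_e` of `G'`: one for each edge of `G` between different
classes, oriented so that the class of the first endpoint is smaller. -/
abbrev CrossE (k n : ℕ) (G : SimpleGraph (PV k n)) :=
  {q : PV k n × PV k n // G.Adj q.1 q.2 ∧ q.1.1 < q.2.1}

/-- Vertices of `G'`: the vertices `p_l^i` (`Sum.inl`), the guard vertices `g_i^1, g_i^2`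
(first `Fin k × Bool` component), the vertices `a_i, b_i` (second `Fin k × Bool` component,
`false` for `a_i` and `true` for `b_i`), and the vertices `u_e`. -/
abbrev GV' (k n : ℕ) (G : SimpleGraph (PV k n)) :=
  PV k n ⊕ ((Fin k × Bool) ⊕ ((Fin k × Bool) ⊕ CrossE k n G))

/-- Edges of `G'` (one orientation each). -/
def rel' {k n : ℕ} (G : SimpleGraph (PV k n)) : GV' k n G → GV' k n G → Prop
  | Sum.inl p, Sum.inr (Sum.inl g) => p.1 = g.1
  | Sum.inl p, Sum.inr (Sum.inr (Sum.inl ab)) => p.1 = ab.1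
  | Sum.inr (Sum.inr (Sum.inr u)), Sum.inr (Sum.inr (Sum.inl ab)) =>
      ab.1 = u.1.1.1 ∨ ab.1 = u.1.2.1
  | _, _ => False

/-- The graph `G'`. -/
def G'graph {k n : ℕ} (G : SimpleGraph (PV k n)) : SimpleGraph (GV' k n G) :=
  SimpleGraph.fromRel (rel' G)

/-- Edge weights of `G'` (one orientation; `0` on non-edges). `l : Fin n` stands for the
`(l+1)`-th vertex, so e.g. the edge `(a_i, p_l^i)` has weight `n + (l+1)`, the edge
`(b_i, p_l^i)` has weight `2n − (l+1) + 1 = 2n − l`, the edge `(u_e, a_{i_m})` has weight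
`3n − (j_m+1) + 1 = 3n − j_m` and the edge `(u_e, b_{i_m})` has weight `2n + (j_m+1)`. -/
def w0 {k n : ℕ} (G : SimpleGraph (PV k n)) : GV' k n G → GV' k n G → ℕ
  | Sum.inl p, Sum.inr (Sum.inl g) => if p.1 = g.1 then 4 * n else 0
  | Sum.inl p, Sum.inr (Sum.inr (Sum.inl ab)) =>
      if p.1 = ab.1 then (if ab.2 then 2 * n - (p.2 : ℕ) else n + (p.2 : ℕ) + 1) else 0
  | Sum.inr (Sum.inr (Sum.inr u)), Sum.inr (Sum.inr (Sum.inl ab)) =>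
      if ab.1 = u.1.1.1 then
        (if ab.2 then 2 * n + (u.1.1.2 : ℕ) + 1 else 3 * n - (u.1.1.2 : ℕ))
      else if ab.1 = u.1.2.1 then
        (if ab.2 then 2 * n + (u.1.2.2 : ℕ) + 1 else 3 * n - (u.1.2.2 : ℕ))
      else 0
  | _, _ => 0

/-- The (symmetric) weight function of `G'`. -/
def wG' {k n : ℕ} (G : SimpleGraph (PV k n)) (x y : GV' k n G) : ℕ :=
  max (w0 G x y) (w0 G y x)

/-- The total weight of a walk. -/
def wWeight {V : Type*} (G : SimpleGraph V) (w : V → V → ℕ) {a b : V} (p : G.Walk a b) : ℕ :=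
  (p.darts.map fun d => w d.toProd.1 d.toProd.2).sum

/-- `K` is a `(k,r)`-center of the edge-weighted graph `(G, w)`. -/
def isCenter {V : Type*} (G : SimpleGraph V) (w : V → V → ℕ) (k r : ℕ) (K : Finset V) : Prop :=
  K.card = k ∧ ∀ u : V, ∃ v ∈ K, ∃ p : G.Walk v u, wWeight G w p ≤ r

lemma reach1 {V : Type*} (G : SimpleGraph V) (w : V → V → ℕ) {x y : V}
    (h : G.Adj x y) : ∃ p : G.Walk x y, wWeight G w p = w x y :=
  ⟨SimpleGraph.Walk.cons h SimpleGraph.Walk.nil, by simp [wWeight]⟩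

lemma reach2 {V : Type*} (G : SimpleGraph V) (w : V → V → ℕ) {x y z : V}
    (h1 : G.Adj x y) (h2 : G.Adj y z) :
    ∃ p : G.Walk x z, wWeight G w p = w x y + w y z :=
  ⟨SimpleGraph.Walk.cons h1 (SimpleGraph.Walk.cons h2 SimpleGraph.Walk.nil),
    by simp [wWeight]⟩

example (k n : ℕ) (G : SimpleGraph (PV k n)) (i : Fin k) (l : Fin n) (b : Bool) :
    (G'graph G).Adj (Sum.inl (i, l)) (Sum.inr (Sum.inr (Sum.inl (i, b)))) := by
  simp [G'graph, rel']

/-- If `G` has a `k`-multicolored independent set, then `G'` has a `(k, 4n)`-center. -/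
theorem stmt5 (k n : ℕ) (hk : 1 ≤ k) (hn : 1 ≤ n) (G : SimpleGraph (PV k n))
    (hclique : ∀ (i : Fin k) (l l' : Fin n), l ≠ l' → G.Adj (i, l) (i, l'))
    (S : Finset (PV k n))
    (hS1 : ∀ i : Fin k, ∃! l : Fin n, (i, l) ∈ S)
    (hS2 : ∀ u ∈ S, ∀ v ∈ S, ¬ G.Adj u v) :
    ∃ K : Finset (GV' k n G), isCenter (G'graph G) (wG' G) k (4 * n) K := by
  classical
  choose s hsS hsu using hS1
  refine ⟨Finset.image (fun i => (Sum.inl (i, s i) : GV' k n G)) Finset.univ, ?_, ?_⟩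
  · rw [Finset.card_image_of_injective _ (fun a b hab => by
      simpa using congrArg (fun x => Sum.elim Prod.fst (fun _ => a) x) hab)]
    simp
  · intro u
    -- key helper: reach p_l^i from p_{s i}^i
    have covP : ∀ (i : Fin k) (l : Fin n),
        ∃ p : (G'graph G).Walk (Sum.inl (i, s i)) (Sum.inl (i, l)), wWeight (G'graph G) (wG' G) p ≤ 4 * n := by
      intro i l
      by_cases hl : l = s i
      · subst hl; exact ⟨SimpleGraph.Walk.nil, by simp [wWeight]⟩
      · have h1 : (G'graph G).Adj (Sum.inl (i, s i)) (Sum.inr (Sum.inr (Sum.inl (i, true)))) := by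
          simp [G'graph, rel']
        have h2 : (G'graph G).Adj (Sum.inr (Sum.inr (Sum.inl (i, true)))) (Sum.inl (i, l)) := by
          simp [G'graph, rel']
        obtain ⟨p, hp⟩ := reach2 (G'graph G) (wG' G) h1 h2
        refine ⟨p, hp.le.trans ?_⟩
        simp [wG', w0]
        omega
    match u with
    | Sum.inl (i, l) =>
      exact ⟨Sum.inl (i, s i), by simp, covP i l⟩
    | Sum.inr (Sum.inl (i, b)) =>
      have h1 : (G'graph G).Adj (Sum.inl (i, s i)) (Sum.inr (Sum.inl (i, b))) := by
        simp [G'graph, rel']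
      obtain ⟨p, hp⟩ := reach1 (G'graph G) (wG' G) h1
      exact ⟨Sum.inl (i, s i), by simp, p, by rw [hp]; simp [wG', w0]⟩
    | Sum.inr (Sum.inr (Sum.inl (i, b))) =>
      have h1 : (G'graph G).Adj (Sum.inl (i, s i)) (Sum.inr (Sum.inr (Sum.inl (i, b)))) := by
        simp [G'graph, rel']
      obtain ⟨p, hp⟩ := reach1 (G'graph G) (wG' G) h1
      refine ⟨Sum.inl (i, s i), by simp, p, ?_⟩
      rw [hp]
      have := (s i).isLt
      cases b <;> simp [wG', w0] <;> omega
    | Sum.inr (Sum.inr (Sum.inr ⟨⟨⟨i1, j1⟩, ⟨i2, j2⟩⟩, hadj, hlt⟩)) =>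
      set u' : GV' k n G := Sum.inr (Sum.inr (Sum.inr ⟨⟨⟨i1, j1⟩, ⟨i2, j2⟩⟩, hadj, hlt⟩)) with hu'
      have hne12 : i1 ≠ i2 := ne_of_lt hlt
      -- generic side lemma
      have side : ∀ (i : Fin k) (j : Fin n), s i ≠ j →
          (∀ b : Bool, (G'graph G).Adj (Sum.inr (Sum.inr (Sum.inl (i, b)))) u') →
          (∀ b : Bool, wG' G (Sum.inr (Sum.inr (Sum.inl (i, b)))) u' =
            (if b then 2 * n + (j : ℕ) + 1 else 3 * n - (j : ℕ))) →
          ∃ v ∈ Finset.image (fun i => (Sum.inl (i, s i) : GV' k n G)) Finset.univ,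
            ∃ p : (G'graph G).Walk v u', wWeight (G'graph G) (wG' G) p ≤ 4 * n := by
        intro i j hne hadjb hwb
        refine ⟨Sum.inl (i, s i), by simp, ?_⟩
        have hsi := (s i).isLt
        have hj := j.isLt
        rcases lt_or_gt_of_ne (fun h => hne (Fin.ext h) : (s i : ℕ) ≠ (j : ℕ)) with hlt' | hlt'
        · -- use a_i (false)
          have h1 : (G'graph G).Adj (Sum.inl (i, s i)) (Sum.inr (Sum.inr (Sum.inl (i, false)))) := by
            simp [G'graph, rel']
          obtain ⟨p, hp⟩ := reach2 (G'graph G) (wG' G) h1 (hadjb false)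
          refine ⟨p, hp.le.trans ?_⟩
          rw [hwb false]
          simp [wG', w0]
          omega
        · have h1 : (G'graph G).Adj (Sum.inl (i, s i)) (Sum.inr (Sum.inr (Sum.inl (i, true)))) := by
            simp [G'graph, rel']
          obtain ⟨p, hp⟩ := reach2 (G'graph G) (wG' G) h1 (hadjb true)
          refine ⟨p, hp.le.trans ?_⟩
          rw [hwb true]
          simp [wG', w0]
          omega
      by_cases h1 : s i1 = j1
      · have hmem : ((i1, j1) : PV k n) ∈ S := h1 ▸ hsS i1
        have h2 : s i2 ≠ j2 := by
          intro h2
          exact hS2 _ hmem _ (h2 ▸ hsS i2) hadj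
        refine side i2 j2 h2 (fun b => ?_) (fun b => ?_)
        · simp [G'graph, rel', u']
        · simp [wG', w0, u', hne12.symm]
      · refine side i1 j1 h1 (fun b => ?_) (fun b => ?_)
        · simp [G'graph, rel', u']
        · simp [wG', w0, u']
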